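/- arXiv:1707.01036 — 6 statements merged into one kernel-verified Lean document; each statement's English description precedes it below -/
import Mathlib

section
/- Let (a,b) ⊂ ℝ, let f : (a,b) → (a,b) be a C¹ diffeomorphism, let φ : (a,b) → (a,b) be a C¹ involution (φ ∘ φ = id, φ ≠ id), and let c ∈ (a,b) be a fixed point of φ. Let x_c ∈ (a,b). Then a differentiable function x : (a,b) → (a,b) satisfies x'(t) = f(x(φ(t))) for all t ∈ (a,b) together with x(c) = x_c if and only if x is twice differentiable, x'(t) ∈ (a,b) for all t, and x satisfies x''(t) = f'(f⁻¹(x'(t)))·f(x(t))·φ'(t) for all t ∈ (a,b) together with x(c) = x_c and x'(c) = f(x_c). -/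
/-!
Differentiating `x' = f ∘ x ∘ φ` gives the second-order equation. Conversely, put
`u = f⁻¹ ∘ x'`. Then `(x, u)` solves the first-order system `x' = f u`, `u' = φ' · f x`, and,
because `φ'(φ t) φ'(t) = 1`, so does the reflected pair `(u ∘ φ, x ∘ φ)`. Both pairs equal
`(x c, x c)` at the fixed point `c` of `φ`, and `f` is `C¹`, hence locally Lipschitz, so
uniqueness for this system gives `u = x ∘ φ`, i.e. `x' = f ∘ x ∘ φ`.
-/

open Set Filter Topology
open scoped NNReal

theorem HasDerivAt.mul_eq_one_of_eventually_leftInverse {g h : ℝ → ℝ} {g' h' y : ℝ}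
    (hg : HasDerivAt g g' (h y)) (hh : HasDerivAt h h' y) (hgh : ∀ᶠ t in 𝓝 y, g (h t) = t) :
    g' * h' = 1 :=
  (hg.comp y hh).unique ((hasDerivAt_id y).congr_of_eventuallyEq hgh)

theorem locallyLipschitzOn_of_hasDerivAt {f f' : ℝ → ℝ} {s : Set ℝ} (hs : IsOpen s)
    (hsc : Convex ℝ s) (hf : ∀ t ∈ s, HasDerivAt f (f' t) t) (hf' : ContinuousOn f' s) :
    LocallyLipschitzOn s f := by
  refine ContDiffOn.locallyLipschitzOn hsc ?_
  rw [show (1 : WithTop ℕ∞) = 0 + 1 from rfl, contDiffOn_succ_iff_deriv_of_isOpen hs]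
  refine ⟨fun t ht => (hf t ht).differentiableAt.differentiableWithinAt, by simp, ?_⟩
  exact contDiffOn_zero.2 (hf'.congr fun t ht => (hf t ht).deriv)

theorem LipschitzOnWith.prodMk_swap_mul {f : ℝ → ℝ} {L : ℝ≥0} {S : Set ℝ}
    (hf : LipschitzOnWith L f S) (r : ℝ) :
    LipschitzOnWith (max L (‖r‖₊ * L)) (fun p : ℝ × ℝ => (f p.2, r * f p.1)) (S ×ˢ S) := by
  have hsnd : LipschitzOnWith L (fun p : ℝ × ℝ => f p.2) (S ×ˢ S) := by
    simpa [Function.comp_def] using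
      hf.comp LipschitzWith.prod_snd.lipschitzOnWith fun p hp => hp.2
  have hfst : LipschitzOnWith L (fun p : ℝ × ℝ => f p.1) (S ×ˢ S) := by
    simpa [Function.comp_def] using
      hf.comp LipschitzWith.prod_fst.lipschitzOnWith fun p hp => hp.1
  exact hsnd.prodMk ((lipschitzWith_smul r).comp_lipschitzOnWith hfst)

theorem coupled_ODE_solution_unique_of_mem_Ioo {f k x₁ u₁ x₂ u₂ : ℝ → ℝ} {U : Set ℝ}
    {a b c : ℝ}
    (hf : LocallyLipschitzOn U f) (hk : ContinuousOn k (Ioo a b)) (hc : c ∈ Ioo a b)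
    (hx₁ : ∀ t ∈ Ioo a b, HasDerivAt x₁ (f (u₁ t)) t)
    (hu₁ : ∀ t ∈ Ioo a b, HasDerivAt u₁ (k t * f (x₁ t)) t)
    (hx₂ : ∀ t ∈ Ioo a b, HasDerivAt x₂ (f (u₂ t)) t)
    (hu₂ : ∀ t ∈ Ioo a b, HasDerivAt u₂ (k t * f (x₂ t)) t)
    (hx₁U : MapsTo x₁ (Ioo a b) U) (hu₁U : MapsTo u₁ (Ioo a b) U)
    (hx₂U : MapsTo x₂ (Ioo a b) U) (hu₂U : MapsTo u₂ (Ioo a b) U)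
    (hx₀ : x₁ c = x₂ c) (hu₀ : u₁ c = u₂ c) :
    EqOn x₁ x₂ (Ioo a b) ∧ EqOn u₁ u₂ (Ioo a b) := by
  suffices h : EqOn (fun t => (x₁ t, u₁ t)) (fun t => (x₂ t, u₂ t)) (Ioo a b) from
    ⟨fun t ht => congrArg Prod.fst (h ht), fun t ht => congrArg Prod.snd (h ht)⟩
  intro T hT
  obtain ⟨α, β, hcαβ, hTαβ, hαβ⟩ :
      ∃ α β, c ∈ Ioo α β ∧ T ∈ Icc α β ∧ Icc α β ⊆ Ioo a b := by
    have := min_le_left c T; have := min_le_right c T; have := lt_min hc.1 hT.1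
    have := le_max_left c T; have := le_max_right c T; have := max_lt hc.2 hT.2
    exact ⟨(a + min c T) / 2, (max c T + b) / 2, ⟨by linarith, by linarith⟩,
      ⟨by linarith, by linarith⟩, fun s hs => ⟨by linarith [hs.1], by linarith [hs.2]⟩⟩
  have himage : ∀ g : ℝ → ℝ, (∀ t ∈ Ioo a b, DifferentiableAt ℝ g t) →
      IsCompact (g '' Icc α β) := fun g hg => isCompact_Icc.image_of_continuousOn
    fun t ht => (hg t (hαβ ht)).continuousAt.continuousWithinAt
  set S := (x₁ '' Icc α β ∪ u₁ '' Icc α β) ∪ (x₂ '' Icc α β ∪ u₂ '' Icc α β)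
  have hS : IsCompact S :=
    ((himage x₁ fun t ht => (hx₁ t ht).differentiableAt).union
      (himage u₁ fun t ht => (hu₁ t ht).differentiableAt)).union
    ((himage x₂ fun t ht => (hx₂ t ht).differentiableAt).union
      (himage u₂ fun t ht => (hu₂ t ht).differentiableAt))
  have hSU : S ⊆ U := by
    rintro _ ((⟨t, ht, rfl⟩ | ⟨t, ht, rfl⟩) | (⟨t, ht, rfl⟩ | ⟨t, ht, rfl⟩))
    exacts [hx₁U (hαβ ht), hu₁U (hαβ ht), hx₂U (hαβ ht), hu₂U (hαβ ht)]
  obtain ⟨L, hL⟩ := (hf.mono hSU).exists_lipschitzOnWith_of_compact hS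
  obtain ⟨t₁, -, ht₁⟩ := isCompact_Icc.exists_isMaxOn
    (nonempty_Icc.2 (hcαβ.1.trans hcαβ.2).le) (hk.mono hαβ).nnnorm
  have hγ₁ : ∀ t ∈ Icc α β, HasDerivAt (fun t => (x₁ t, u₁ t)) (f (u₁ t), k t * f (x₁ t)) t :=
    fun t ht => (hx₁ t (hαβ ht)).prodMk (hu₁ t (hαβ ht))
  have hγ₂ : ∀ t ∈ Icc α β, HasDerivAt (fun t => (x₂ t, u₂ t)) (f (u₂ t), k t * f (x₂ t)) t :=
    fun t ht => (hx₂ t (hαβ ht)).prodMk (hu₂ t (hαβ ht))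
  refine ODE_solution_unique_of_mem_Icc (K := max L (‖k t₁‖₊ * L)) (s := fun _ => S ×ˢ S)
    (fun t ht => (hL.prodMk_swap_mul (k t)).weaken
      (max_le_max le_rfl (by gcongr; exact ht₁ (Ioo_subset_Icc_self ht)))) hcαβ
    (HasDerivAt.continuousOn hγ₁) (fun t ht => hγ₁ t (Ioo_subset_Icc_self ht)) ?_
    (HasDerivAt.continuousOn hγ₂) (fun t ht => hγ₂ t (Ioo_subset_Icc_self ht)) ?_
    (Prod.ext hx₀ hu₀) hTαβ
  · exact fun t ht => ⟨.inl (.inl ⟨t, Ioo_subset_Icc_self ht, rfl⟩),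
      .inl (.inr ⟨t, Ioo_subset_Icc_self ht, rfl⟩)⟩
  · exact fun t ht => ⟨.inr (.inl ⟨t, Ioo_subset_Icc_self ht, rfl⟩),
      .inr (.inr ⟨t, Ioo_subset_Icc_self ht, rfl⟩)⟩

theorem hasDerivAt_deriv_of_hasDerivAt_comp_involution {f f' φ φ' x : ℝ → ℝ} {s : Set ℝ}
    (hs : IsOpen s) (hf' : ∀ t ∈ s, HasDerivAt f (f' t) t) (hφmap : MapsTo φ s s)
    (hφinv : ∀ t ∈ s, φ (φ t) = t) (hφ' : ∀ t ∈ s, HasDerivAt φ (φ' t) t) (hxmap : MapsTo x s s)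
    (hx : ∀ t ∈ s, HasDerivAt x (f (x (φ t))) t) {t : ℝ} (ht : t ∈ s) :
    HasDerivAt (deriv x) (f' (x (φ t)) * f (x t) * φ' t) t := by
  have hdx : deriv x =ᶠ[𝓝 t] fun y => f (x (φ y)) :=
    eventually_of_mem (hs.mem_nhds ht) fun y hy => (hx y hy).deriv
  have := (hf' _ (hxmap (hφmap ht))).comp t ((hx _ (hφmap ht)).comp t (hφ' t ht))
  rw [hφinv t ht, ← mul_assoc] at this
  exact this.congr_of_eventuallyEq hdx

theorem hasDerivAt_comp_involution_of_deriv_deriv {a b : ℝ} {f fi f' fi' φ φ' x : ℝ → ℝ}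
    (hfimap : MapsTo fi (Ioo a b) (Ioo a b)) (hfi₁ : ∀ t ∈ Ioo a b, fi (f t) = t)
    (hfi₂ : ∀ t ∈ Ioo a b, f (fi t) = t) (hf' : ∀ t ∈ Ioo a b, HasDerivAt f (f' t) t)
    (hf'cont : ContinuousOn f' (Ioo a b)) (hfi' : ∀ t ∈ Ioo a b, HasDerivAt fi (fi' t) t)
    (hφmap : MapsTo φ (Ioo a b) (Ioo a b)) (hφinv : ∀ t ∈ Ioo a b, φ (φ t) = t)
    (hφ' : ∀ t ∈ Ioo a b, HasDerivAt φ (φ' t) t) (hφ'cont : ContinuousOn φ' (Ioo a b))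
    {c : ℝ} (hc : c ∈ Ioo a b) (hφc : φ c = c) (hxmap : MapsTo x (Ioo a b) (Ioo a b))
    (hx : ∀ t ∈ Ioo a b, DifferentiableAt ℝ x t)
    (hx' : ∀ t ∈ Ioo a b, DifferentiableAt ℝ (deriv x) t)
    (hx'map : MapsTo (deriv x) (Ioo a b) (Ioo a b))
    (hx'' : ∀ t ∈ Ioo a b, deriv (deriv x) t = f' (fi (deriv x t)) * f (x t) * φ' t)
    (hx'c : deriv x c = f (x c)) :
    ∀ t ∈ Ioo a b, HasDerivAt x (f (x (φ t))) t := by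
  set u := fun t => fi (deriv x t)
  have humap : MapsTo u (Ioo a b) (Ioo a b) := hfimap.comp hx'map
  have hxu : ∀ t ∈ Ioo a b, HasDerivAt x (f (u t)) t := fun t ht => by
    rw [hfi₂ _ (hx'map ht)]
    exact (hx t ht).hasDerivAt
  have hu : ∀ t ∈ Ioo a b, HasDerivAt u (φ' t * f (x t)) t := fun t ht => by
    have hinv := (hf' _ (hfimap (hx'map ht))).mul_eq_one_of_eventually_leftInverse
      (hfi' _ (hx'map ht)) (eventually_of_mem (isOpen_Ioo.mem_nhds (hx'map ht)) hfi₂)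
    refine ((hfi' _ (hx'map ht)).comp t (hx' t ht).hasDerivAt).congr_deriv ?_
    rw [hx'' t ht]
    linear_combination (f (x t) * φ' t) * hinv
  have huφ : ∀ t ∈ Ioo a b, HasDerivAt (u ∘ φ) (f (x (φ t))) t := fun t ht => by
    have hinv := (hφ' _ (hφmap ht)).mul_eq_one_of_eventually_leftInverse (hφ' t ht)
      (eventually_of_mem (isOpen_Ioo.mem_nhds ht) hφinv)
    refine ((hu _ (hφmap ht)).comp t (hφ' t ht)).congr_deriv ?_
    linear_combination f (x (φ t)) * hinv
  have hxφ : ∀ t ∈ Ioo a b, HasDerivAt (x ∘ φ) (φ' t * f (u (φ t))) t := fun t ht => by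
    simpa only [mul_comm] using (hxu _ (hφmap ht)).comp t (hφ' t ht)
  have huc : u c = x c := by simp only [u, hx'c, hfi₁ _ (hxmap hc)]
  have hux := (coupled_ODE_solution_unique_of_mem_Ioo
    (locallyLipschitzOn_of_hasDerivAt isOpen_Ioo (convex_Ioo a b) hf' hf'cont) hφ'cont hc
    hxu hu huφ hxφ hxmap humap (humap.comp hφmap) (hxmap.comp hφmap)
    (by simp [hφc, huc]) (by simp [hφc, huc])).2
  intro t ht
  simpa only [show u t = x (φ t) from hux ht] using hxu t ht

theorem stmt_0_general (a b c x_c : ℝ)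
    (f fi f' fi' φ φ' : ℝ → ℝ)
    (hfmap : Set.MapsTo f (Set.Ioo a b) (Set.Ioo a b))
    (hfimap : Set.MapsTo fi (Set.Ioo a b) (Set.Ioo a b))
    (hfi₁ : ∀ t ∈ Set.Ioo a b, fi (f t) = t)
    (hfi₂ : ∀ t ∈ Set.Ioo a b, f (fi t) = t)
    (hf' : ∀ t ∈ Set.Ioo a b, HasDerivAt f (f' t) t)
    (hf'cont : ContinuousOn f' (Set.Ioo a b))
    (hfi' : ∀ t ∈ Set.Ioo a b, HasDerivAt fi (fi' t) t)
    (hφmap : Set.MapsTo φ (Set.Ioo a b) (Set.Ioo a b))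
    (hφinv : ∀ t ∈ Set.Ioo a b, φ (φ t) = t)
    (hφ' : ∀ t ∈ Set.Ioo a b, HasDerivAt φ (φ' t) t)
    (hφ'cont : ContinuousOn φ' (Set.Ioo a b))
    (hc : c ∈ Set.Ioo a b) (hφc : φ c = c)
    (x : ℝ → ℝ)
    (hxmap : Set.MapsTo x (Set.Ioo a b) (Set.Ioo a b)) :
    ((∀ t ∈ Set.Ioo a b, HasDerivAt x (f (x (φ t))) t) ∧ x c = x_c)
    ↔
    ((∀ t ∈ Set.Ioo a b, DifferentiableAt ℝ x t) ∧
     (∀ t ∈ Set.Ioo a b, DifferentiableAt ℝ (deriv x) t) ∧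
     (∀ t ∈ Set.Ioo a b, deriv x t ∈ Set.Ioo a b) ∧
     (∀ t ∈ Set.Ioo a b,
       deriv (deriv x) t = f' (fi (deriv x t)) * f (x t) * φ' t) ∧
     x c = x_c ∧ deriv x c = f x_c) := by
  constructor
  · rintro ⟨hx, rfl⟩
    have hdx : ∀ t ∈ Ioo a b, deriv x t = f (x (φ t)) := fun t ht => (hx t ht).deriv
    have hx'' := fun t (ht : t ∈ Ioo a b) => hasDerivAt_deriv_of_hasDerivAt_comp_involution
      isOpen_Ioo hf' hφmap hφinv hφ' hxmap hx ht
    refine ⟨fun t ht => (hx t ht).differentiableAt, fun t ht => (hx'' t ht).differentiableAt,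
      fun t ht => hdx t ht ▸ hfmap (hxmap (hφmap ht)), fun t ht => ?_, rfl, by rw [hdx c hc, hφc]⟩
    rw [(hx'' t ht).deriv, hdx t ht, hfi₁ _ (hxmap (hφmap ht))]
  · rintro ⟨hx, hx', hx'mem, hx'', rfl, hx'c⟩
    exact ⟨hasDerivAt_comp_involution_of_deriv_deriv hfimap hfi₁ hfi₂ hf' hf'cont hfi' hφmap
      hφinv hφ' hφ'cont hc hφc hxmap hx hx' hx'mem hx'' hx'c, rfl⟩

/-- A differentiable function `x : (a,b) → (a,b)` solves
`x'(t) = f(x(φ(t)))`, `x(c) = x_c` if and only if it is twice differentiable,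
`x'(t) ∈ (a,b)`, and solves `x''(t) = f'(f⁻¹(x'(t)))·f(x(t))·φ'(t)`,
`x(c) = x_c`, `x'(c) = f(x_c)`.  Here `f` is a C¹ diffeomorphism of `(a,b)`
with inverse `fi` and derivative `f'`, and `φ` is a C¹ involution of `(a,b)`
with derivative `φ'` and fixed point `c`. -/
theorem stmt_0 (a b c x_c : ℝ) (hab : a < b)
    (f fi f' fi' φ φ' : ℝ → ℝ)
    (hfmap : Set.MapsTo f (Set.Ioo a b) (Set.Ioo a b))
    (hfimap : Set.MapsTo fi (Set.Ioo a b) (Set.Ioo a b))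
    (hfi₁ : ∀ t ∈ Set.Ioo a b, fi (f t) = t)
    (hfi₂ : ∀ t ∈ Set.Ioo a b, f (fi t) = t)
    (hf' : ∀ t ∈ Set.Ioo a b, HasDerivAt f (f' t) t)
    (hf'cont : ContinuousOn f' (Set.Ioo a b))
    (hfi' : ∀ t ∈ Set.Ioo a b, HasDerivAt fi (fi' t) t)
    (hfi'cont : ContinuousOn fi' (Set.Ioo a b))
    (hφmap : Set.MapsTo φ (Set.Ioo a b) (Set.Ioo a b))
    (hφinv : ∀ t ∈ Set.Ioo a b, φ (φ t) = t)
    (hφne : ∃ t ∈ Set.Ioo a b, φ t ≠ t)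
    (hφ' : ∀ t ∈ Set.Ioo a b, HasDerivAt φ (φ' t) t)
    (hφ'cont : ContinuousOn φ' (Set.Ioo a b))
    (hc : c ∈ Set.Ioo a b) (hφc : φ c = c)
    (hxc : x_c ∈ Set.Ioo a b)
    (x : ℝ → ℝ)
    (hxmap : Set.MapsTo x (Set.Ioo a b) (Set.Ioo a b)) :
    ((∀ t ∈ Set.Ioo a b, HasDerivAt x (f (x (φ t))) t) ∧ x c = x_c)
    ↔
    ((∀ t ∈ Set.Ioo a b, DifferentiableAt ℝ x t) ∧
     (∀ t ∈ Set.Ioo a b, DifferentiableAt ℝ (deriv x) t) ∧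
     (∀ t ∈ Set.Ioo a b, deriv x t ∈ Set.Ioo a b) ∧
     (∀ t ∈ Set.Ioo a b,
       deriv (deriv x) t = f' (fi (deriv x t)) * f (x t) * φ' t) ∧
     x c = x_c ∧ deriv x c = f x_c) :=
  stmt_0_general a b c x_c f fi f' fi' φ φ' hfmap hfimap hfi₁ hfi₂ hf' hf'cont hfi' hφmap hφinv hφ'
    hφ'cont hc hφc x hxmap
end

section
/- Let T > 0 and I = [−T,T]. If x : I → ℝ is differentiable, satisfies x'(t) = x(t)·x(−t) for all t ∈ I, and x(−T) = x(T), then x(t) = 0 for all t ∈ I. -/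
/-!
Rolle's theorem applied to the periodic solution `x` gives a point where `x t * x (-t) = 0`,
so `x` vanishes at some interior point. Seen as a solution of the linear equation
`y' = x(-t) y`, whose coefficient is bounded on the compact interval, `x` must then coincide
with the zero solution by uniqueness for Lipschitz ODEs.
-/

open Set

theorem eqOn_zero_of_hasDerivAt_eq_smul {E : Type*} [NormedAddCommGroup E] [NormedSpace ℝ E]
    {a b t₀ : ℝ} {K : NNReal} {c : ℝ → ℝ} {y : ℝ → E}
    (hc : ∀ t ∈ Ioo a b, ‖c t‖₊ ≤ K) (ht₀ : t₀ ∈ Ioo a b)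
    (hy : ContinuousOn y (Icc a b)) (hy' : ∀ t ∈ Ioo a b, HasDerivAt y (c t • y t) t)
    (hy₀ : y t₀ = 0) :
    EqOn y 0 (Icc a b) :=
  ODE_solution_unique_of_mem_Icc (v := fun t z => c t • z) (s := fun _ => univ)
    (fun t ht => ((lipschitzWith_smul (c t)).weaken (hc t ht)).lipschitzOnWith) ht₀
    hy hy' (fun _ _ => trivial)
    continuousOn_const (fun _ _ => by simp) (fun _ _ => trivial)
    hy₀

theorem exists_mem_Ioo_eq_zero_of_hasDerivAt_mul_comp_neg {T : ℝ} (hT : 0 < T) {x : ℝ → ℝ}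
    (hx : ContinuousOn x (Icc (-T) T))
    (hx' : ∀ t ∈ Ioo (-T) T, HasDerivAt x (x t * x (-t)) t) (hbc : x (-T) = x T) :
    ∃ t₀ ∈ Ioo (-T) T, x t₀ = 0 := by
  obtain ⟨ξ, hξ, hξ0⟩ := exists_hasDerivAt_eq_zero (by linarith) hx hbc hx'
  rcases mul_eq_zero.mp hξ0 with h | h
  · exact ⟨ξ, hξ, h⟩
  · exact ⟨-ξ, ⟨neg_lt_neg hξ.2, neg_lt.mp hξ.1⟩, h⟩

/-- If a differentiable `x : [−T,T] → ℝ` satisfies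
`x'(t) = x(t)·x(−t)` on `I = [−T,T]` and `x(−T) = x(T)`, then `x ≡ 0` on `I`. -/
theorem stmt_4 (T : ℝ) (hT : 0 < T) (x : ℝ → ℝ)
    (hx : ∀ t ∈ Set.Icc (-T) T,
      HasDerivWithinAt x (x t * x (-t)) (Set.Icc (-T) T) t)
    (hbc : x (-T) = x T) :
    ∀ t ∈ Set.Icc (-T) T, x t = 0 := by
  have hcont : ContinuousOn x (Icc (-T) T) := fun t ht => (hx t ht).continuousWithinAt
  have hx' : ∀ t ∈ Ioo (-T) T, HasDerivAt x (x t * x (-t)) t := fun t ht =>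
    (hx t (Ioo_subset_Icc_self ht)).hasDerivAt (Icc_mem_nhds ht.1 ht.2)
  obtain ⟨t₀, ht₀, hx₀⟩ := exists_mem_Ioo_eq_zero_of_hasDerivAt_mul_comp_neg hT hcont hx' hbc
  obtain ⟨C, hC⟩ := isCompact_Icc.exists_bound_of_continuousOn hcont
  have hbound : ∀ t ∈ Ioo (-T) T, ‖x (-t)‖₊ ≤ C.toNNReal := fun t ht => by
    rw [← NNReal.coe_le_coe, coe_nnnorm]
    exact (hC _ ⟨neg_le_neg ht.2.le, neg_le.mp ht.1.le⟩).trans (Real.le_coe_toNNReal C)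
  exact eqOn_zero_of_hasDerivAt_eq_smul hbound ht₀ hcont
    (fun t ht => by simpa only [smul_eq_mul, mul_comm] using hx' t ht) hx₀
end

section
/- Suppose m ∈ ℝ with mT ∉ πℤ (in particular m ≠ 0). Then for every integrable function h : I → ℝ, the function u(t) := ∫_{−T}^{T} Ḡ_m(t,s)·h(s) ds is the unique solution of the problem x'(t) + m·x(−t) = h(t) for a.e. t ∈ I, x(−T) = x(T); that is, u is absolutely continuous on I, u(−T) = u(T), u'(t) + m·u(−t) = h(t) for almost every t ∈ I, and any absolutely continuous function v : I → ℝ with v(−T) = v(T) and v'(t) + m·v(−t) = h(t) for a.e. t ∈ I equals u on I. -/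
/-
Off the diagonal, `2 sin(mT) Ḡ_m(t,s) = C(t+s) + S(t-s)` with the even continuous function
`C(x) = cos(m(T-|x|))` (`cosPart`) and the odd function `S(y) = sign(y) sin(m(T-|y|))`
(`sinPart`), which jumps by `2 sin(mT)` at `0`. Since `C' = mS` and `S' = -mC` away from `0`,
for each `σ` the function `t ↦ Ḡ_m(t,σ)` solves `∂ₜḠ_m(t,σ) + m Ḡ_m(-t,σ) = 0` except for a
unit jump at `t = σ`. Integrating against `h` and exchanging the integrals (the kernel is
bounded) gives the integral form of the equation for `u`; the boundary condition is
`Ḡ_m(-T,σ) = Ḡ_m(T,σ)`.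

The difference `w` of two solutions solves the homogeneous problem, so it is `C¹` inside `I`
and `P(t) = w(t) cos(mt) + w(-t) sin(mt)` (the real part of `(w(t) + i w(-t)) e^{-imt}`) is
constant. The boundary condition and `sin(mT) ≠ 0` give `P ≡ 0`, and `P(t) = P(-t) = 0`
forces `w(t) = 0`.
-/

open MeasureTheory

/-- The Green's function `Ḡ_m` of the periodic problem
`x'(t) + m·x(−t) = h(t)` on `[−T,T]`, `x(−T) = x(T)`, defined by
`2·sin(mT)·Ḡ_m(t,s) = cos(m(T−s−t)) + sin(m(T+s−t))` if `−t ≤ s < t`;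
`cos(m(T−s−t)) − sin(m(T−s+t))` if `−s ≤ t < s`;
`cos(m(T+s+t)) + sin(m(T+s−t))` if `s < −|t|`;
`cos(m(T+s+t)) − sin(m(T−s+t))` if `t < −|s|`; and on the diagonal by
`cos(m(T−2t)) − sin(mT)` if `m > 0` and `cos(m(T−2t)) + sin(mT)` if `m < 0`. -/
noncomputable def Gbar (T m t s : ℝ) : ℝ :=
  (if -t ≤ s ∧ s < t then Real.cos (m * (T - s - t)) + Real.sin (m * (T + s - t))
   else if -s ≤ t ∧ t < s then Real.cos (m * (T - s - t)) - Real.sin (m * (T - s + t))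
   else if s < -|t| then Real.cos (m * (T + s + t)) + Real.sin (m * (T + s - t))
   else if t < -|s| then Real.cos (m * (T + s + t)) - Real.sin (m * (T - s + t))
   else if 0 < m then Real.cos (m * (T - 2 * t)) - Real.sin (m * T)
   else Real.cos (m * (T - 2 * t)) + Real.sin (m * T)) /
    (2 * Real.sin (m * T))

/-- `x` is an absolutely continuous solution of `x'(t) + m·x(−t) = h(t)` a.e.
on `I = [−T,T]` with `x(−T) = x(T)`: absolute continuity is expressed by the
existence of an integrable a.e. derivative `g` with
`x(t) = x(−T) + ∫_{−T}^t g(s) ds`. -/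
def IsSol (T m : ℝ) (h x : ℝ → ℝ) : Prop :=
  (∃ g : ℝ → ℝ, IntegrableOn g (Set.Icc (-T) T) ∧
    (∀ t ∈ Set.Icc (-T) T, x t = x (-T) + ∫ s in (-T)..t, g s) ∧
    (∀ᵐ t ∂(volume.restrict (Set.Icc (-T) T)), g t + m * x (-t) = h t)) ∧
  x (-T) = x T

open Set Real Topology

theorem hasDerivAt_ite_lt_of_ne {σ c d s : ℝ} (hs : s ≠ σ) :
    HasDerivAt (fun x => if σ < x then c else d) 0 s := by
  rcases hs.lt_or_gt with hs | hs
  · refine (hasDerivAt_const s d).congr_of_eventuallyEq ?_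
    filter_upwards [gt_mem_nhds hs] with x hx
    rw [if_neg hx.not_gt]
  · refine (hasDerivAt_const s c).congr_of_eventuallyEq ?_
    filter_upwards [lt_mem_nhds hs] with x hx
    rw [if_pos hx]

theorem eq_left_of_hasDerivAt_zero {f : ℝ → ℝ} {a b x : ℝ} (hf : ContinuousOn f (Icc a b))
    (hf' : ∀ y ∈ Ioo a b, HasDerivAt f 0 y) (hx : x ∈ Icc a b) : f x = f a := by
  have := intervalIntegral.integral_eq_sub_of_hasDerivAt_of_le hx.1
    (hf.mono (Icc_subset_Icc_right hx.2)) (fun y hy => hf' y ⟨hy.1, hy.2.trans_le hx.2⟩)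
    intervalIntegrable_const
  rw [intervalIntegral.integral_zero] at this
  linarith

namespace Gbar

variable {T m : ℝ}

noncomputable def cosPart (T m x : ℝ) : ℝ := cos (m * (T - |x|))

noncomputable def sinPart (T m y : ℝ) : ℝ :=
  if 0 < y then sin (m * (T - y)) else -sin (m * (T + y))

theorem eq_of_ne {t s : ℝ} (hts : t ≠ s) :
    Gbar T m t s = (cosPart T m (t + s) + sinPart T m (t - s)) / (2 * sin (m * T)) := by
  unfold Gbar cosPart sinPart
  congr 1
  rcases hts.lt_or_gt with hlt | hgt <;> rcases le_or_gt 0 (t + s) with hp | hn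
  · rw [if_neg (by grind), if_pos ⟨by linarith, hlt⟩, if_neg (by linarith), abs_of_nonneg hp]
    ring_nf
  · rw [if_neg (by grind), if_neg (by grind), if_neg (by grind), if_pos (by grind),
      if_neg (by linarith), abs_of_neg hn]
    ring_nf
  · rw [if_pos ⟨by linarith, hgt⟩, if_pos (by linarith), abs_of_nonneg hp]
    ring_nf
  · rw [if_neg (by grind), if_neg (by grind), if_pos (by grind), if_pos (by linarith),
      abs_of_neg hn]
    ring_nf

theorem cosPart_neg (x : ℝ) : cosPart T m (-x) = cosPart T m x := by
  simp only [cosPart, abs_neg]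

theorem sinPart_neg {y : ℝ} (hy : y ≠ 0) : sinPart T m (-y) = -sinPart T m y := by
  unfold sinPart
  rcases hy.lt_or_gt with hy | hy
  · rw [if_pos (by linarith), if_neg hy.not_gt]
    ring_nf
  · rw [if_neg (by linarith), if_pos hy]
    ring_nf

@[fun_prop]
theorem continuous_cosPart : Continuous (cosPart T m) := by
  unfold cosPart
  fun_prop

theorem continuous_sinPart_sub_jump :
    Continuous fun y => sinPart T m y - if 0 < y then 2 * sin (m * T) else 0 := by
  have : (fun y => sinPart T m y - if 0 < y then 2 * sin (m * T) else 0) =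
      fun y => if y ≤ 0 then -sin (m * (T + y)) else sin (m * (T - y)) - 2 * sin (m * T) := by
    ext y
    unfold sinPart
    by_cases hy : y ≤ 0
    · simp [hy, hy.not_gt]
    · simp [hy, not_le.mp hy]
  rw [this]
  exact Continuous.if_le (by fun_prop) (by fun_prop) continuous_id continuous_const
    fun y hy => by simp only [hy, add_zero, sub_zero]; ring

theorem hasDerivAt_cosPart {x : ℝ} (hx : x ≠ 0) :
    HasDerivAt (cosPart T m) (m * sinPart T m x) x := by
  rcases hx.lt_or_gt with hx | hx
  · have h : HasDerivAt (fun x => cos (m * (T + x))) (m * sinPart T m x) x := by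
      rw [sinPart, if_neg hx.not_gt]
      simpa [mul_comm] using ((hasDerivAt_id x).const_add T |>.const_mul m).cos
    refine h.congr_of_eventuallyEq ?_
    filter_upwards [gt_mem_nhds hx] with y hy
    rw [cosPart, abs_of_neg hy, sub_neg_eq_add]
  · have h : HasDerivAt (fun x => cos (m * (T - x))) (m * sinPart T m x) x := by
      rw [sinPart, if_pos hx]
      simpa [mul_comm] using ((hasDerivAt_id x).const_sub T |>.const_mul m).cos
    refine h.congr_of_eventuallyEq ?_
    filter_upwards [lt_mem_nhds hx] with y hy
    rw [cosPart, abs_of_pos hy]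

theorem hasDerivAt_sinPart {y : ℝ} (hy : y ≠ 0) :
    HasDerivAt (sinPart T m) (-(m * cosPart T m y)) y := by
  rcases hy.lt_or_gt with hy | hy
  · have h : HasDerivAt (fun y => -sin (m * (T + y))) (-(m * cosPart T m y)) y := by
      rw [cosPart, abs_of_neg hy, sub_neg_eq_add]
      simpa [mul_comm] using ((hasDerivAt_id y).const_add T |>.const_mul m).sin.fun_neg
    refine h.congr_of_eventuallyEq ?_
    filter_upwards [gt_mem_nhds hy] with z hz
    rw [sinPart, if_neg hz.not_gt]
  · have h : HasDerivAt (fun y => sin (m * (T - y))) (-(m * cosPart T m y)) y := by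
      rw [cosPart, abs_of_pos hy]
      simpa [mul_comm] using ((hasDerivAt_id y).const_sub T |>.const_mul m).sin
    refine h.congr_of_eventuallyEq ?_
    filter_upwards [lt_mem_nhds hy] with z hz
    rw [sinPart, if_pos hz]

theorem abs_cosPart_le (x : ℝ) : |cosPart T m x| ≤ 1 := abs_cos_le_one _

theorem abs_sinPart_le (y : ℝ) : |sinPart T m y| ≤ 1 := by
  unfold sinPart
  split_ifs <;> simp only [abs_neg, abs_sin_le_one]

@[fun_prop]
theorem measurable_sinPart : Measurable (sinPart T m) :=
  Measurable.ite measurableSet_Ioi (by fun_prop) (by fun_prop)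

/-- `2 sin(mT)` times a primitive of `s ↦ m Ḡ_m(-s,σ)`; the step cancels the jump of
`sinPart` at `s = σ`. -/
noncomputable def primitive (T m σ s : ℝ) : ℝ :=
  (if σ < s then 2 * sin (m * T) else 0) - (cosPart T m (s + σ) + sinPart T m (s - σ))

theorem continuous_primitive (σ : ℝ) : Continuous (primitive T m σ) := by
  have h : primitive T m σ = fun s => -cosPart T m (s + σ) -
      (fun y => sinPart T m y - if 0 < y then 2 * sin (m * T) else 0) (s - σ) := by
    ext s
    simp only [primitive, sub_pos]
    ring
  rw [h]
  exact (continuous_cosPart.comp (continuous_add_const σ)).neg.sub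
    (continuous_sinPart_sub_jump.comp (continuous_id.sub continuous_const))

theorem hasDerivAt_primitive {σ s : ℝ} (hs₁ : s ≠ -σ) (hs₂ : s ≠ σ) :
    HasDerivAt (primitive T m σ) (m * (cosPart T m (s - σ) - sinPart T m (s + σ))) s := by
  have hc := (hasDerivAt_cosPart (T := T) (m := m) (x := s + σ)
    (fun h => hs₁ (by linarith))).comp_add_const s σ
  have hs := (hasDerivAt_sinPart (T := T) (m := m) (y := s - σ)
    (sub_ne_zero.mpr hs₂)).comp_sub_const s σ
  refine ((hasDerivAt_ite_lt_of_ne hs₂).sub (hc.add hs)).congr_deriv ?_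
  ring

theorem integral_eq_primitive_sub (σ : ℝ) {a t : ℝ} (hat : a ≤ t) :
    ∫ s in a..t, m * (cosPart T m (s - σ) - sinPart T m (s + σ)) =
      primitive T m σ t - primitive T m σ a := by
  refine integral_eq_of_hasDerivAt_off_countable_of_le _ _ hat
    ((countable_singleton σ).insert (-σ)) (continuous_primitive σ).continuousOn
    (fun s ⟨_, hs⟩ => ?_) ?_
  · simp only [mem_insert_iff, mem_singleton_iff, not_or] at hs
    exact hasDerivAt_primitive hs.1 hs.2
  · refine (intervalIntegrable_const (c := 2 * |m|)).mono_fun'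
      (Measurable.aestronglyMeasurable (by fun_prop)) (ae_of_all _ fun s => ?_)
    simp only [Real.norm_eq_abs, abs_mul]
    have := abs_sub (cosPart T m (s - σ)) (sinPart T m (s + σ))
    have := abs_cosPart_le (T := T) (m := m) (s - σ)
    have := abs_sinPart_le (T := T) (m := m) (s + σ)
    nlinarith [abs_nonneg m]

theorem mul_apply_neg_eq {s σ : ℝ} (hs : s ≠ -σ) :
    m * Gbar T m (-s) σ =
      m * (cosPart T m (s - σ) - sinPart T m (s + σ)) / (2 * sin (m * T)) := by
  rw [eq_of_ne (fun h => hs (by linarith)), show -s + σ = -(s - σ) by ring,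
    show -s - σ = -(s + σ) by ring, cosPart_neg, sinPart_neg (fun h => hs (by linarith))]
  ring

theorem sub_add_integral_neg_eq_indicator (hD : sin (m * T) ≠ 0) {a t σ : ℝ} (hat : a ≤ t)
    (haσ : a < σ) (hσt : σ ≠ t) :
    Gbar T m t σ - Gbar T m a σ + ∫ s in a..t, m * Gbar T m (-s) σ =
      (Ioc a t).indicator 1 σ := by
  have hGφ : ∀ᵐ s, s ∈ uIoc a t → m * Gbar T m (-s) σ =
      m * (cosPart T m (s - σ) - sinPart T m (s + σ)) / (2 * sin (m * T)) := by
    filter_upwards [Measure.ae_ne volume (-σ)] with s hs _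
    exact mul_apply_neg_eq hs
  rw [intervalIntegral.integral_congr_ae hGφ, intervalIntegral.integral_div,
    integral_eq_primitive_sub σ hat, eq_of_ne hσt.symm, eq_of_ne haσ.ne]
  simp only [primitive, indicator, mem_Ioc, haσ, true_and, Pi.one_apply, if_neg haσ.not_gt]
  rcases hσt.lt_or_gt with hlt | hgt
  · rw [if_pos hlt, if_pos hlt.le]
    field_simp
    ring
  · rw [if_neg hgt.not_gt, if_neg hgt.not_ge]
    field_simp
    ring

theorem neg_T_eq {σ : ℝ} (hσ : |σ| < T) : Gbar T m (-T) σ = Gbar T m T σ := by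
  obtain ⟨h1, h2⟩ := abs_lt.mp hσ
  rw [eq_of_ne (by linarith), eq_of_ne (by linarith)]
  simp only [cosPart, sinPart, abs_of_neg (by linarith : -T + σ < 0),
    if_neg (by linarith : ¬ 0 < -T - σ), if_pos (by linarith : 0 < T - σ),
    abs_of_pos (by linarith : 0 < T + σ)]
  ring_nf
  rw [cos_neg, sin_neg]
  ring

theorem abs_le (t s : ℝ) : |Gbar T m t s| ≤ 2 / |2 * sin (m * T)| := by
  unfold Gbar
  rw [abs_div]
  gcongr
  have hadd (x y : ℝ) : |cos x + sin y| ≤ 2 :=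
    (abs_add_le _ _).trans (by linarith [abs_cos_le_one x, abs_sin_le_one y])
  have hsub (x y : ℝ) : |cos x - sin y| ≤ 2 :=
    (abs_sub _ _).trans (by linarith [abs_cos_le_one x, abs_sin_le_one y])
  split_ifs <;> first | exact hadd _ _ | exact hsub _ _

theorem measurable_uncurry : Measurable (Function.uncurry (Gbar T m)) := by
  unfold Gbar
  apply Measurable.div _ measurable_const
  apply Measurable.ite ((measurableSet_le measurable_fst.neg measurable_snd).inter
    (measurableSet_lt measurable_snd measurable_fst)) (by fun_prop)
  apply Measurable.ite ((measurableSet_le measurable_snd.neg measurable_fst).inter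
    (measurableSet_lt measurable_fst measurable_snd)) (by fun_prop)
  apply Measurable.ite (measurableSet_lt measurable_snd measurable_fst.abs.neg) (by fun_prop)
  apply Measurable.ite (measurableSet_lt measurable_fst measurable_snd.abs.neg) (by fun_prop)
  split_ifs <;> fun_prop

end Gbar

section Kernel

variable {α β : Type*} [MeasurableSpace α] [MeasurableSpace β] {μ : Measure α}
  {ν : Measure β}

theorem integrable_kernel_mul [IsFiniteMeasure μ] [SFinite ν] {K : α → β → ℝ}
    (hK : Measurable (Function.uncurry K)) {C : ℝ} (hC : ∀ x y, |K x y| ≤ C) {h : β → ℝ}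
    (hh : Integrable h ν) : Integrable (fun p : α × β => K p.1 p.2 * h p.2) (μ.prod ν) :=
  (hh.comp_snd μ).bdd_mul hK.aestronglyMeasurable (ae_of_all _ fun p => hC p.1 p.2)

theorem integral_kernel_mul_eq {K L : ℝ → ℝ → ℝ} (hK : Measurable (Function.uncurry K))
    (hL : Measurable (Function.uncurry L)) {CK CL : ℝ} (hKC : ∀ x y, |K x y| ≤ CK)
    (hLC : ∀ x y, |L x y| ≤ CL) {h : ℝ → ℝ} {a b x : ℝ} (hh : IntegrableOn h (Ioc a b))
    (hax : a ≤ x) (hxb : x ≤ b)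
    (hjump : ∀ᵐ σ ∂volume.restrict (Ioc a b),
      K x σ - K a σ + ∫ s in a..x, L s σ = (Ioc a x).indicator 1 σ) :
    ∫ σ in a..b, K x σ * h σ =
      (∫ σ in a..b, K a σ * h σ) + ∫ s in a..x, (h s - ∫ σ in a..b, L s σ * h σ) := by
  simp only [intervalIntegral.integral_of_le (hax.trans hxb),
    intervalIntegral.integral_of_le hax] at hjump ⊢
  have hF : Integrable (fun p : ℝ × ℝ => L p.1 p.2 * h p.2)
      ((volume.restrict (Ioc a x)).prod (volume.restrict (Ioc a b))) :=
    integrable_kernel_mul hL hLC hh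
  have hKh (y : ℝ) : IntegrableOn (fun σ => K y σ * h σ) (Ioc a b) :=
    hh.bdd_mul (hK.comp measurable_prodMk_left).aestronglyMeasurable
      (ae_of_all _ fun σ => hKC y σ)
  have hLh :
      Integrable (fun σ => (∫ s in Ioc a x, L s σ) * h σ) (volume.restrict (Ioc a b)) := by
    simpa only [integral_mul_const] using hF.integral_prod_right
  have hKdiff : (∫ σ in Ioc a b, K x σ * h σ) - ∫ σ in Ioc a b, K a σ * h σ =
      (∫ σ in Ioc a x, h σ) - ∫ σ in Ioc a b, (∫ s in Ioc a x, L s σ) * h σ := by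
    calc (∫ σ in Ioc a b, K x σ * h σ) - ∫ σ in Ioc a b, K a σ * h σ
        = ∫ σ in Ioc a b, (K x σ * h σ - K a σ * h σ) := (integral_sub (hKh x) (hKh a)).symm
      _ = ∫ σ in Ioc a b, ((Ioc a x).indicator h σ - (∫ s in Ioc a x, L s σ) * h σ) := by
        refine integral_congr_ae (hjump.mono fun σ hσ => ?_)
        rw [← eq_sub_iff_add_eq'] at hσ
        simp only [hσ]
        by_cases hσx : σ ∈ Ioc a x <;> simp only [hσx, indicator_of_mem, indicator_of_notMem,
          not_false_eq_true, Pi.one_apply] <;> ring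
      _ = _ := by
        rw [integral_sub (hh.indicator measurableSet_Ioc) hLh,
          setIntegral_indicator measurableSet_Ioc, inter_eq_right.mpr (Ioc_subset_Ioc_right hxb)]
  have hLswap : ∫ s in Ioc a x, ∫ σ in Ioc a b, L s σ * h σ =
      ∫ σ in Ioc a b, (∫ s in Ioc a x, L s σ) * h σ := by
    simp only [integral_integral_swap (f := fun s σ => L s σ * h σ) hF, integral_mul_const]
  rw [integral_sub (hh.mono_set (Ioc_subset_Ioc_right hxb)) hF.integral_prod_left, hLswap]
  linarith

end Kernel

theorem isSol_integral_Gbar_mul {T m : ℝ} (hT : 0 ≤ T) (hD : sin (m * T) ≠ 0)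
    {h : ℝ → ℝ} (hh : IntegrableOn h (Icc (-T) T)) :
    IsSol T m h fun t => ∫ s in (-T)..T, Gbar T m t s * h s := by
  set u : ℝ → ℝ := fun t => ∫ s in (-T)..T, Gbar T m t s * h s
  have hh' : IntegrableOn h (Ioc (-T) T) := hh.mono_set Ioc_subset_Icc_self
  have hG_neg : Measurable (Function.uncurry fun s σ => Gbar T m (-s) σ) :=
    Gbar.measurable_uncurry.comp (measurable_fst.neg.prodMk measurable_snd)
  have hu_neg : IntegrableOn (fun s => u (-s)) (Icc (-T) T) := by
    have := (integrable_kernel_mul (μ := volume.restrict (Icc (-T) T)) hG_neg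
      (fun s σ => Gbar.abs_le (-s) σ) hh').integral_prod_left
    simp only [u, intervalIntegral.integral_of_le (neg_le_self hT)]
    exact this
  refine ⟨⟨fun s => h s - m * u (-s), hh.sub (hu_neg.const_mul m), fun t ht => ?_,
    ae_of_all _ fun t => by ring⟩, ?_⟩
  · have hjump : ∀ᵐ σ ∂volume.restrict (Ioc (-T) T), Gbar T m t σ - Gbar T m (-T) σ +
        ∫ s in (-T)..t, m * Gbar T m (-s) σ = (Ioc (-T) t).indicator 1 σ := by
      filter_upwards [ae_restrict_mem measurableSet_Ioc,
        ae_restrict_of_ae (Measure.ae_ne volume t)] with σ hσ hσt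
      exact Gbar.sub_add_integral_neg_eq_indicator hD ht.1 hσ.1 hσt
    have hL : Measurable (Function.uncurry fun s σ => m * Gbar T m (-s) σ) :=
      measurable_const.mul hG_neg
    have hLC (s σ : ℝ) : |m * Gbar T m (-s) σ| ≤ |m| * (2 / |2 * sin (m * T)|) := by
      rw [abs_mul]
      exact mul_le_mul_of_nonneg_left (Gbar.abs_le _ _) (abs_nonneg m)
    have key :=
      integral_kernel_mul_eq Gbar.measurable_uncurry hL Gbar.abs_le hLC hh' ht.1 ht.2 hjump
    simp only [mul_assoc, intervalIntegral.integral_const_mul] at key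
    exact key
  · refine intervalIntegral.integral_congr_ae ?_
    filter_upwards [Measure.ae_ne volume T] with σ hσT hσ
    rw [uIoc_of_le (neg_le_self hT)] at hσ
    rw [Gbar.neg_T_eq (abs_lt.mpr ⟨hσ.1, lt_of_le_of_ne hσ.2 hσT⟩)]

namespace IsSol

variable {T m : ℝ} {h x : ℝ → ℝ}

theorem sub {y : ℝ → ℝ} (hx : IsSol T m h x) (hy : IsSol T m h y) : IsSol T m 0 (x - y) := by
  obtain ⟨⟨gx, hgx, hrepx, hodex⟩, hperx⟩ := hx
  obtain ⟨⟨gy, hgy, hrepy, hodey⟩, hpery⟩ := hy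
  refine ⟨⟨gx - gy, hgx.sub hgy, fun t ht => ?_, ?_⟩,
    by simp only [Pi.sub_apply, hperx, hpery]⟩
  · have hsub : uIcc (-T) t ⊆ Icc (-T) T := by
      rw [uIcc_of_le ht.1]
      exact Icc_subset_Icc_right ht.2
    rw [Pi.sub_apply, Pi.sub_apply, hrepx t ht, hrepy t ht, Pi.sub_def,
      intervalIntegral.integral_sub ((hgx.mono_set hsub).intervalIntegrable)
        ((hgy.mono_set hsub).intervalIntegrable)]
    ring
  · filter_upwards [hodex, hodey] with s hsx hsy
    simp only [Pi.sub_apply, Pi.zero_apply]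
    linarith

theorem continuousOn (hx : IsSol T m h x) : ContinuousOn x (Icc (-T) T) := by
  obtain ⟨⟨g, hg, hrep, -⟩, -⟩ := hx
  refine ((continuousOn_const (c := x (-T))).add (intervalIntegral.continuousOn_primitive hg)).congr
    fun t ht => ?_
  rw [hrep t ht, intervalIntegral.integral_of_le ht.1]
  rfl

theorem hasDerivAt {w : ℝ → ℝ} (hw : IsSol T m 0 w) {t : ℝ} (ht : t ∈ Ioo (-T) T) :
    HasDerivAt w (-(m * w (-t))) t := by
  have hc := hw.continuousOn
  obtain ⟨⟨g, -, hrep, hode⟩, -⟩ := hw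
  have hrhs : ContinuousOn (fun s => -(m * w (-s))) (Icc (-T) T) :=
    (continuousOn_const.mul (hc.comp continuousOn_neg
      fun s hs => neg_mem_Icc_iff.mpr (by rwa [neg_neg]))).neg
  have hrep' : ∀ τ ∈ Icc (-T) T, w τ = w (-T) + ∫ s in (-T)..τ, -(m * w (-s)) := by
    intro τ hτ
    rw [hrep τ hτ]
    congr 1
    refine intervalIntegral.integral_congr_ae ?_
    filter_upwards [(ae_restrict_iff' measurableSet_Icc).mp hode] with s hs hsτ
    rw [uIoc_of_le hτ.1] at hsτ
    have := hs ⟨hsτ.1.le, hsτ.2.trans hτ.2⟩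
    rw [Pi.zero_apply] at this
    linarith
  have hIcc : Icc (-T) T ∈ 𝓝 t := Icc_mem_nhds ht.1 ht.2
  refine HasDerivAt.congr_of_eventuallyEq ?_ (Filter.eventually_of_mem hIcc hrep')
  refine (intervalIntegral.integral_hasDerivAt_right ?_ ?_ (hrhs.continuousAt hIcc)).const_add _
  · refine (hrhs.mono ?_).intervalIntegrable
    rw [uIcc_of_le ht.1.le]
    exact Icc_subset_Icc_right ht.2.le
  · exact (hrhs.mono Ioo_subset_Icc_self).stronglyMeasurableAtFilter isOpen_Ioo t ht

theorem firstIntegral_eq {w : ℝ → ℝ} (hw : IsSol T m 0 w) {t : ℝ} (ht : t ∈ Icc (-T) T) :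
    w t * cos (m * t) + w (-t) * sin (m * t) = w (-T) * cos (m * T) - w T * sin (m * T) := by
  set P : ℝ → ℝ := fun τ => w τ * cos (m * τ) + w (-τ) * sin (m * τ)
  have hc := hw.continuousOn
  have hP_cont : ContinuousOn P (Icc (-T) T) :=
    (hc.mul (by fun_prop)).add ((hc.comp continuousOn_neg
      fun τ hτ => neg_mem_Icc_iff.mpr (by rwa [neg_neg])).mul (by fun_prop))
  have hP_deriv (τ : ℝ) (hτ : τ ∈ Ioo (-T) T) : HasDerivAt P 0 τ := by
    have hw_neg := (hw.hasDerivAt (t := -τ) (neg_mem_Ioo_iff.mpr (by rwa [neg_neg]))).scomp τ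
      (hasDerivAt_neg τ)
    have hcos := ((hasDerivAt_id τ).const_mul m).cos
    have hsin := ((hasDerivAt_id τ).const_mul m).sin
    refine (((hw.hasDerivAt hτ).mul hcos).add (hw_neg.mul hsin)).congr_deriv ?_
    simp only [neg_neg, smul_eq_mul, id, Function.comp_apply]
    ring
  have := eq_left_of_hasDerivAt_zero hP_cont hP_deriv ht
  simpa only [P, neg_neg, mul_neg, cos_neg, sin_neg, ← sub_eq_add_neg] using this

theorem eqOn_zero {w : ℝ → ℝ} (hD : sin (m * T) ≠ 0) (hw : IsSol T m 0 w) :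
    EqOn w 0 (Icc (-T) T) := by
  intro t ht
  have hwT : w T = 0 := by
    have := hw.firstIntegral_eq ⟨ht.1.trans ht.2, le_rfl⟩
    rw [hw.2] at this
    have : w T * sin (m * T) = 0 := by linarith
    exact (mul_eq_zero.mp this).resolve_right hD
  have e1 := hw.firstIntegral_eq ht
  have e2 := hw.firstIntegral_eq (neg_mem_Icc_iff.mpr (by rwa [neg_neg]))
  simp only [hw.2, hwT, neg_neg, mul_neg, cos_neg, sin_neg, zero_mul, sub_zero] at e1 e2
  rw [Pi.zero_apply]
  linear_combination cos (m * t) * e1 - sin (m * t) * e2 - w t * sin_sq_add_cos_sq (m * t)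

end IsSol

/-- If `mT ∉ πℤ`, then for every integrable `h` the function
`u(t) = ∫_{−T}^{T} Ḡ_m(t,s)·h(s) ds` is the unique solution of
`x'(t) + m·x(−t) = h(t)` a.e. on `I`, `x(−T) = x(T)`. -/
theorem stmt_7 (T m : ℝ) (hT : 0 < T)
    (hres : ∀ k : ℤ, m * T ≠ k * Real.pi)
    (h : ℝ → ℝ) (hh : IntegrableOn h (Set.Icc (-T) T)) :
    ∀ u : ℝ → ℝ, u = (fun t => ∫ s in (-T)..T, Gbar T m t s * h s) →
      IsSol T m h u ∧
      ∀ v : ℝ → ℝ, IsSol T m h v → ∀ t ∈ Set.Icc (-T) T, v t = u t := by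
  rintro u rfl
  have hD : sin (m * T) ≠ 0 := fun h0 => by
    obtain ⟨k, hk⟩ := sin_eq_zero_iff.mp h0
    exact hres k hk.symm
  have hu := isSol_integral_Gbar_mul hT.le hD hh
  exact ⟨hu, fun v hv t ht => sub_eq_zero.mp ((hv.sub hu).eqOn_zero hD ht)⟩
end

section
/- For all t, s ∈ I with |s| ≠ |t|, the partial derivative of Ḡ_m with respect to its first argument exists at (t,s) and satisfies ∂Ḡ_m/∂t(t,s) + m·Ḡ_m(−t,s) = 0. -/
open Real Filter Topology

lemma hasDerivAt_mul_const_sub (m a t : ℝ) : HasDerivAt (fun τ => m * (a - τ)) (-m) t := by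
  simpa using ((hasDerivAt_id' t).const_sub a).const_mul m

lemma hasDerivAt_mul_const_add (m a t : ℝ) : HasDerivAt (fun τ => m * (a + τ)) m t := by
  simpa using ((hasDerivAt_id' t).const_add a).const_mul m

lemma abs_lt_or_lt_neg_abs_of_abs_ne {s t : ℝ} (hst : |s| ≠ |t|) :
    |s| < t ∨ t < -|s| ∨ |t| < s ∨ s < -|t| := by
  rcases hst.lt_or_gt with h | h
  · rcases lt_abs.mp h with h | h
    · exact Or.inl h
    · exact Or.inr (Or.inl (by linarith))
  · rcases lt_abs.mp h with h | h
    · exact Or.inr (Or.inr (Or.inl h))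
    · exact Or.inr (Or.inr (Or.inr (by linarith)))

section Branches

variable {T m t s : ℝ}

lemma Gbar_eq_of_abs_snd_lt (h : |s| < t) :
    Gbar T m t s = (cos (m * (T - s - t)) + sin (m * (T + s - t))) / (2 * sin (m * T)) := by
  obtain ⟨h₁, h₂⟩ := abs_lt.mp h
  rw [Gbar, if_pos ⟨h₁.le, h₂⟩]

lemma Gbar_eq_of_lt_neg_abs_snd (h : t < -|s|) :
    Gbar T m t s = (cos (m * (T + s + t)) - sin (m * (T - s + t))) / (2 * sin (m * T)) := by
  have hs₁ := le_abs_self s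
  have hs₂ := neg_abs_le s
  have ht : |t| = -t := abs_of_neg (by linarith)
  rw [Gbar, if_neg, if_neg, if_neg, if_pos h]
  · rw [ht]; linarith
  all_goals rintro ⟨h', -⟩; linarith

lemma Gbar_eq_of_abs_fst_lt (h : |t| < s) :
    Gbar T m t s = (cos (m * (T - s - t)) - sin (m * (T - s + t))) / (2 * sin (m * T)) := by
  obtain ⟨h₁, h₂⟩ := abs_lt.mp h
  rw [Gbar, if_neg, if_pos ⟨by linarith, h₂⟩]
  rintro ⟨-, h'⟩; linarith

lemma Gbar_eq_of_lt_neg_abs_fst (h : s < -|t|) :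
    Gbar T m t s = (cos (m * (T + s + t)) + sin (m * (T + s - t))) / (2 * sin (m * T)) := by
  have ht₁ := le_abs_self t
  have ht₂ := neg_abs_le t
  rw [Gbar, if_neg, if_neg, if_pos h]
  all_goals rintro ⟨h', -⟩; linarith

lemma hasDerivAt_Gbar_of_abs_snd_lt (h : |s| < t) :
    HasDerivAt (fun τ => Gbar T m τ s) (-(m * Gbar T m (-t) s)) t := by
  have hG : (fun τ => Gbar T m τ s) =ᶠ[𝓝 t]
      fun τ => (cos (m * (T - s - τ)) + sin (m * (T + s - τ))) / (2 * sin (m * T)) :=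
    (eventually_gt_nhds h).mono fun τ => Gbar_eq_of_abs_snd_lt
  rw [Gbar_eq_of_lt_neg_abs_snd (neg_lt_neg h)]
  have hd := ((hasDerivAt_mul_const_sub m (T - s) t).cos.add
    (hasDerivAt_mul_const_sub m (T + s) t).sin).div_const (2 * sin (m * T))
  refine (hd.congr_of_eventuallyEq hG).congr_deriv ?_
  ring_nf

lemma hasDerivAt_Gbar_of_lt_neg_abs_snd (h : t < -|s|) :
    HasDerivAt (fun τ => Gbar T m τ s) (-(m * Gbar T m (-t) s)) t := by
  have hG : (fun τ => Gbar T m τ s) =ᶠ[𝓝 t]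
      fun τ => (cos (m * (T + s + τ)) - sin (m * (T - s + τ))) / (2 * sin (m * T)) :=
    (eventually_lt_nhds h).mono fun τ => Gbar_eq_of_lt_neg_abs_snd
  rw [Gbar_eq_of_abs_snd_lt (lt_neg_of_lt_neg h)]
  have hd := ((hasDerivAt_mul_const_add m (T + s) t).cos.sub
    (hasDerivAt_mul_const_add m (T - s) t).sin).div_const (2 * sin (m * T))
  refine (hd.congr_of_eventuallyEq hG).congr_deriv ?_
  ring_nf

lemma hasDerivAt_Gbar_of_abs_fst_lt (h : |t| < s) :
    HasDerivAt (fun τ => Gbar T m τ s) (-(m * Gbar T m (-t) s)) t := by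
  have hG : (fun τ => Gbar T m τ s) =ᶠ[𝓝 t]
      fun τ => (cos (m * (T - s - τ)) - sin (m * (T - s + τ))) / (2 * sin (m * T)) :=
    (continuous_abs.continuousAt.eventually_lt continuousAt_const h).mono
      fun τ => Gbar_eq_of_abs_fst_lt
  rw [Gbar_eq_of_abs_fst_lt (by rwa [abs_neg])]
  have hd := ((hasDerivAt_mul_const_sub m (T - s) t).cos.sub
    (hasDerivAt_mul_const_add m (T - s) t).sin).div_const (2 * sin (m * T))
  refine (hd.congr_of_eventuallyEq hG).congr_deriv ?_
  ring_nf

lemma hasDerivAt_Gbar_of_lt_neg_abs_fst (h : s < -|t|) :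
    HasDerivAt (fun τ => Gbar T m τ s) (-(m * Gbar T m (-t) s)) t := by
  have hG : (fun τ => Gbar T m τ s) =ᶠ[𝓝 t]
      fun τ => (cos (m * (T + s + τ)) + sin (m * (T + s - τ))) / (2 * sin (m * T)) :=
    (continuousAt_const.eventually_lt continuous_abs.continuousAt.neg h).mono
      fun τ => Gbar_eq_of_lt_neg_abs_fst
  rw [Gbar_eq_of_lt_neg_abs_fst (by rwa [abs_neg])]
  have hd := ((hasDerivAt_mul_const_add m (T + s) t).cos.add
    (hasDerivAt_mul_const_sub m (T + s) t).sin).div_const (2 * sin (m * T))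
  refine (hd.congr_of_eventuallyEq hG).congr_deriv ?_
  ring_nf

end Branches

theorem stmt_9_general (T m : ℝ) :
    ∀ t ∈ Set.Icc (-T) T, ∀ s ∈ Set.Icc (-T) T, |s| ≠ |t| →
      HasDerivAt (fun τ => Gbar T m τ s) (-(m * Gbar T m (-t) s)) t := by
  intro t _ s _ hst
  rcases abs_lt_or_lt_neg_abs_of_abs_ne hst with h | h | h | h
  · exact hasDerivAt_Gbar_of_abs_snd_lt h
  · exact hasDerivAt_Gbar_of_lt_neg_abs_snd h
  · exact hasDerivAt_Gbar_of_abs_fst_lt h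
  · exact hasDerivAt_Gbar_of_lt_neg_abs_fst h

/-- For all `t, s ∈ I = [−T,T]` with `|s| ≠ |t|`, the partial
derivative of `Ḡ_m` with respect to its first argument exists at `(t,s)` and
`∂Ḡ_m/∂t(t,s) + m·Ḡ_m(−t,s) = 0`. -/
theorem stmt_9 (T m : ℝ) (hT : 0 < T)
    (hres : ∀ k : ℤ, m * T ≠ k * Real.pi) :
    ∀ t ∈ Set.Icc (-T) T, ∀ s ∈ Set.Icc (-T) T, |s| ≠ |t| →
      HasDerivAt (fun τ => Gbar T m τ s) (-(m * Gbar T m (-t) s)) t :=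
  stmt_9_general T m
end

section
/- If m ∈ ℝ satisfies mT ∉ πℤ and |mT| > π/4, then Ḡ_m changes sign on I²: there exist (t₁,s₁) ∈ I² and (t₂,s₂) ∈ I² such that Ḡ_m(t₁,s₁) > 0 and Ḡ_m(t₂,s₂) < 0. -/
/-!
On the edge `t = T` the first branch of the definition applies to every `s ∈ [-T, T)`, and there
`2 sin(mT) Ḡ_m(T, s) = cos(ms) + sin(ms) = √2 sin(ms + π/4)`. At `s = 0` this numerator is `1`;
since `|mT| > π/4`, some `s ∈ (-T, T)` has `ms ∈ (-3π/4, -π/4)`, where it is negative.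
-/

open Real

lemma cos_add_sin_eq_sqrt_two_mul_sin (x : ℝ) : cos x + sin x = √2 * sin (x + π / 4) := by
  have h : √2 * √2 = 2 := Real.mul_self_sqrt zero_le_two
  rw [sin_add, sin_pi_div_four, cos_pi_div_four]
  linear_combination (-(sin x + cos x) / 2) * h

lemma cos_add_sin_neg {x : ℝ} (h₁ : -(3 * π / 4) < x) (h₂ : x < -(π / 4)) :
    cos x + sin x < 0 := by
  rw [cos_add_sin_eq_sqrt_two_mul_sin]
  exact mul_neg_of_pos_of_neg (by positivity)
    (sin_neg_of_neg_of_neg_pi_lt (by linarith) (by linarith))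

lemma exists_mul_mem_Ioo_of_pi_div_four_lt {T m : ℝ} (hbig : π / 4 < |m * T|) :
    ∃ s, |s| < |T| ∧ -(3 * π / 4) < m * s ∧ m * s < -(π / 4) := by
  have hm : m ≠ 0 := by rintro rfl; simp at hbig; linarith [pi_pos]
  set v := -(π / 4 + min |m * T| (3 * π / 4)) / 2 with hv
  have hv₁ : -(3 * π / 4) < v := by
    have := min_le_right |m * T| (3 * π / 4)
    linarith [pi_pos]
  have hv₂ : v < -(π / 4) := by
    have := lt_min hbig (by linarith [pi_pos] : π / 4 < 3 * π / 4)
    linarith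
  have hv_abs : |v| < |m| * |T| := by
    rw [← abs_mul, abs_of_neg (by linarith [pi_pos])]
    have := min_le_left |m * T| (3 * π / 4)
    linarith
  refine ⟨v / m, ?_, ?_⟩
  · rw [abs_div, div_lt_iff₀ (abs_pos.mpr hm)]
    linarith
  · rw [mul_div_cancel₀ v hm]
    exact ⟨hv₁, hv₂⟩

lemma sin_mul_ne_zero {m T : ℝ} (hres : ∀ k : ℤ, m * T ≠ k * π) :
    sin (m * T) ≠ 0 := fun h ↦
  let ⟨k, hk⟩ := sin_eq_zero_iff.mp h
  hres k hk.symm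

lemma Gbar_right_edge {T m s : ℝ} (hs₁ : -T ≤ s) (hs₂ : s < T) :
    Gbar T m T s = (cos (m * s) + sin (m * s)) / (2 * sin (m * T)) := by
  rw [Gbar, if_pos ⟨hs₁, hs₂⟩, show m * (T - s - T) = -(m * s) by ring,
    show m * (T + s - T) = m * s by ring, cos_neg]

/-- If `mT ∉ πℤ` and `|mT| > π/4`, then `Ḡ_m` changes sign on
`I² = [−T,T]²`. -/
theorem stmt_14 (T m : ℝ) (hT : 0 < T)
    (hres : ∀ k : ℤ, m * T ≠ k * Real.pi)
    (hbig : Real.pi / 4 < |m * T|) :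
    (∃ t₁ ∈ Set.Icc (-T) T, ∃ s₁ ∈ Set.Icc (-T) T, 0 < Gbar T m t₁ s₁) ∧
    (∃ t₂ ∈ Set.Icc (-T) T, ∃ s₂ ∈ Set.Icc (-T) T, Gbar T m t₂ s₂ < 0) := by
  obtain ⟨s, hs, hms₁, hms₂⟩ := exists_mul_mem_Ioo_of_pi_div_four_lt hbig
  rw [abs_of_pos hT, abs_lt] at hs
  have hT_mem : T ∈ Set.Icc (-T) T := ⟨by linarith, le_rfl⟩
  have h0_mem : (0 : ℝ) ∈ Set.Icc (-T) T := ⟨by linarith, hT.le⟩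
  have hs_mem : s ∈ Set.Icc (-T) T := ⟨hs.1.le, hs.2.le⟩
  have hG₀ : Gbar T m T 0 = 1 / (2 * sin (m * T)) := by
    simp [Gbar_right_edge (neg_nonpos.mpr hT.le) hT]
  have hGs := Gbar_right_edge (m := m) hs.1.le hs.2
  have hnum := cos_add_sin_neg hms₁ hms₂
  rcases (sin_mul_ne_zero hres).lt_or_gt with hsin | hsin
  · exact ⟨⟨T, hT_mem, s, hs_mem, hGs ▸ div_pos_of_neg_of_neg hnum (by linarith)⟩,
      ⟨T, hT_mem, 0, h0_mem, hG₀ ▸ div_neg_of_pos_of_neg one_pos (by linarith)⟩⟩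
  · exact ⟨⟨T, hT_mem, 0, h0_mem, hG₀ ▸ div_pos one_pos (by linarith)⟩,
      ⟨T, hT_mem, s, hs_mem, hGs ▸ div_neg_of_neg_of_pos hnum (by linarith)⟩⟩
end

section
/- Let T > 0 and I = [−T,T]. Let x : I → ℝ be absolutely continuous with x(−T) − x(T) ≥ 0 and suppose x'(t) + m·x(−t) > 0 for almost every t ∈ I. Then: (1) if m ∈ (0, π/(4T)], then x(t) > 0 for all t ∈ I; (2) if m ∈ [−π/(4T), 0), then x(t) < 0 for all t ∈ I. -/
/-!
For `s ∈ [0, T]` write `u(s) = x(s)`, `v(s) = x(-s)`. The functions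
`W_θ(s) = u(s) cos(θ - m s) - v(s) sin(θ - m s)` are absolutely continuous with
`W_θ' = (x'(s) + m x(-s)) cos(θ - m s) + (x'(-s) + m x(s)) sin(θ - m s)` a.e.; both coefficients are
positive by hypothesis (at `s` and at `-s`), so `W_θ` is strictly increasing wherever
`θ - m s ∈ [0, π/2]`. When `0 < m T ≤ π/4`:
* `W_{π/4}(0) = 0 < W_{π/4}(T)` together with `x(T) ≤ x(-T)` forces `x(T) > 0`;
* then `W_{π/2}(T) ≤ 0`, and `W_{π/2}(r) < W_{π/2}(T)` reads `x(r) sin(m r) < x(-r) cos(m r)` for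
  `r ∈ [0, T)`, which gives `x(0) > 0` and, once `x > 0` on `(0, T]`, also `x > 0` on `[-T, 0)`;
* `W_{m t}(t) = x(t) > W_{m t}(0) = x(0)(cos(m t) - sin(m t)) ≥ 0` for `t ∈ (0, T]`.
For `m < 0` the function `t ↦ -x(-t)` satisfies the hypotheses with `-m` in place of `m`.
-/

open MeasureTheory Set Filter Topology

theorem AbsolutelyContinuousOnInterval.congr {f g : ℝ → ℝ} {a b : ℝ}
    (hf : AbsolutelyContinuousOnInterval f a b) (hfg : EqOn f g (uIcc a b)) :
    AbsolutelyContinuousOnInterval g a b := by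
  refine Tendsto.congr' ?_ hf
  filter_upwards [mem_inf_of_right (mem_principal_self _)] with E hE
  refine Finset.sum_congr rfl fun i hi => ?_
  rw [hfg (hE.1 i hi).1, hfg (hE.1 i hi).2]

theorem intervalIntegral_pos_of_ae_pos {f : ℝ → ℝ} {a b : ℝ} (hab : a < b)
    (hfi : IntervalIntegrable f volume a b) (hf : ∀ᵐ x, x ∈ Ioc a b → 0 < f x) :
    0 < ∫ x in a..b, f x := by
  have hf' : ∀ᵐ x ∂volume.restrict (Ioc a b), 0 < f x :=
    (ae_restrict_iff' measurableSet_Ioc).2 hf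
  rw [intervalIntegral.integral_pos_iff_support_of_nonneg_ae' (by
    rw [uIoc_of_le hab.le]; filter_upwards [hf'] with x hx using hx.le) hfi]
  refine ⟨hab, ?_⟩
  have hnull : volume {x | ¬(x ∈ Ioc a b → 0 < f x)} = 0 := ae_iff.1 hf
  calc (0 : ENNReal) < volume (Ioc a b) := by simp [hab]
    _ = volume (Ioc a b \ {x | ¬(x ∈ Ioc a b → 0 < f x)}) := (measure_sdiff_null hnull).symm
    _ ≤ volume (Function.support f ∩ Ioc a b) :=
        measure_mono fun x ⟨hx, hpos⟩ => ⟨(not_not.1 hpos hx).ne', hx⟩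

theorem AbsolutelyContinuousOnInterval.strictMonoOn_of_ae_deriv_pos {f : ℝ → ℝ} {a b : ℝ}
    (hf : AbsolutelyContinuousOnInterval f a b) (hderiv : ∀ᵐ x, x ∈ Icc a b → 0 < deriv f x) :
    StrictMonoOn f (Icc a b) := by
  intro p hp q hq hpq
  have hsub : uIcc p q ⊆ uIcc a b := by
    rw [uIcc_of_le hpq.le]; exact (Icc_subset_Icc hp.1 hq.2).trans Icc_subset_uIcc
  have hpq' := hf.mono hsub
  rw [← sub_pos, ← hpq'.integral_deriv_eq_sub]
  refine intervalIntegral_pos_of_ae_pos hpq hpq'.intervalIntegrable_deriv ?_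
  filter_upwards [hderiv] with x hx hxpq
  exact hx ⟨hp.1.trans hxpq.1.le, hxpq.2.trans hq.2⟩

section Primitive

variable {y f : ℝ → ℝ} {a b : ℝ}

theorem absolutelyContinuousOnInterval_of_eq_add_integral (hf : IntervalIntegrable f volume a b)
    (hy : ∀ s ∈ uIcc a b, y s = y a + ∫ r in a..s, f r) :
    AbsolutelyContinuousOnInterval y a b :=
  ((ContDiffOn.absolutelyContinuousOnInterval contDiffOn_const).add
    (hf.absolutelyContinuousOnInterval_intervalIntegral left_mem_uIcc)).congr
    fun s hs => (hy s hs).symm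

theorem ae_hasDerivAt_of_eq_add_integral (hf : IntervalIntegrable f volume a b)
    (hy : ∀ s ∈ uIcc a b, y s = y a + ∫ r in a..s, f r) :
    ∀ᵐ s, s ∈ uIcc a b → HasDerivAt y (f s) s := by
  have ha : ∀ᵐ s, s ≠ min a b := by simp [ae_iff, measure_singleton]
  have hb : ∀ᵐ s, s ≠ max a b := by simp [ae_iff, measure_singleton]
  filter_upwards [hf.ae_hasDerivAt_integral, ha, hb] with s hs hsa hsb hsab
  have hint : Ioo (min a b) (max a b) ∈ 𝓝 s :=
    Ioo_mem_nhds (lt_of_le_of_ne hsab.1 hsa.symm) (lt_of_le_of_ne hsab.2 hsb)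
  refine ((hs hsab a left_mem_uIcc).const_add (y a)).congr_of_eventuallyEq ?_
  filter_upwards [hint] with r hr using hy r (Ioo_subset_Icc_self hr)

end Primitive

open Real

theorem mul_cos_add_mul_sin_pos {p q α : ℝ} (hp : 0 < p) (hq : 0 < q) (hα : α ∈ Icc 0 (π / 2)) :
    0 < p * cos α + q * sin α := by
  have hsin : 0 ≤ sin α := sin_nonneg_of_nonneg_of_le_pi hα.1 (by linarith [pi_pos, hα.2])
  rcases hα.2.lt_or_eq with h | rfl
  · have hcos : 0 < cos α := cos_pos_of_mem_Ioo ⟨by linarith [hα.1, pi_pos], h⟩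
    nlinarith [mul_pos hp hcos, mul_nonneg hq.le hsin]
  · simpa using hq

theorem sin_le_cos_of_le_pi_div_four {α : ℝ} (h₀ : 0 ≤ α) (h₁ : α ≤ π / 4) : sin α ≤ cos α := by
  rw [← sin_pi_div_two_sub]
  exact sin_le_sin_of_le_of_le_pi_div_two (by linarith [pi_pos]) (by linarith) (by linarith)

theorem mul_mem_Icc_zero_pi_div_four {m T s : ℝ} (hm : 0 ≤ m) (hmT : m * T ≤ π / 4)
    (hs : s ∈ Icc 0 T) : m * s ∈ Icc 0 (π / 4) :=
  ⟨mul_nonneg hm hs.1, (mul_le_mul_of_nonneg_left hs.2 hm).trans hmT⟩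

/-- `W_θ(s)`: the first coordinate of `(x(s), x(-s))` rotated by the angle `θ - m s`. -/
noncomputable def rotatedPair (x : ℝ → ℝ) (m θ s : ℝ) : ℝ :=
  x s * cos (θ - m * s) - x (-s) * sin (θ - m * s)

theorem hasDerivAt_rotatedPair {x : ℝ → ℝ} {m θ s u v : ℝ} (hu : HasDerivAt x u s)
    (hv : HasDerivAt (fun r => x (-r)) v s) :
    HasDerivAt (rotatedPair x m θ)
      ((u + m * x (-s)) * cos (θ - m * s) + (m * x s - v) * sin (θ - m * s)) s := by
  have hφ : HasDerivAt (fun r => θ - m * r) (-m) s := by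
    simpa using ((hasDerivAt_id s).const_mul m).const_sub θ
  exact ((hu.fun_mul hφ.cos).fun_sub (hv.fun_mul hφ.sin)).congr_deriv (by ring)

theorem AbsolutelyContinuousOnInterval.rotatedPair {x : ℝ → ℝ} {m θ a b : ℝ}
    (hx : AbsolutelyContinuousOnInterval x a b)
    (hxn : AbsolutelyContinuousOnInterval (fun r => x (-r)) a b) :
    AbsolutelyContinuousOnInterval (rotatedPair x m θ) a b := by
  have hcos : ContDiff ℝ 1 fun s => cos (θ - m * s) := by fun_prop
  have hsin : ContDiff ℝ 1 fun s => sin (θ - m * s) := by fun_prop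
  exact (hx.fun_mul hcos.contDiffOn.absolutelyContinuousOnInterval).fun_sub
    (hxn.fun_mul hsin.contDiffOn.absolutelyContinuousOnInterval)

theorem neg_mem_symm_uIcc {T t : ℝ} (ht : t ∈ uIcc (-T) T) : -t ∈ uIcc (-T) T := by
  rwa [← Set.mem_neg, neg_uIcc, neg_neg, uIcc_comm]

theorem IntervalIntegrable.comp_neg_symm {g : ℝ → ℝ} {T : ℝ}
    (hg : IntervalIntegrable g volume (-T) T) :
    IntervalIntegrable (fun s => g (-s)) volume (-T) T := by
  simpa using ((IntervalIntegrable.iff_comp_neg (f := g)).1 hg).symm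

theorem ae_comp_neg_of_symm_uIcc {p : ℝ → Prop} {T : ℝ} (h : ∀ᵐ t, t ∈ uIcc (-T) T → p t) :
    ∀ᵐ t, t ∈ uIcc (-T) T → p (-t) := by
  filter_upwards [(Measure.measurePreserving_neg volume).quasiMeasurePreserving.ae h]
    with t ht hmem using ht (neg_mem_symm_uIcc hmem)

theorem neg_comp_neg_eq_add_integral {x g : ℝ → ℝ} {T : ℝ}
    (hg : IntervalIntegrable g volume (-T) T)
    (hx : ∀ t ∈ uIcc (-T) T, x t = x (-T) + ∫ s in (-T)..t, g s) :
    ∀ t ∈ uIcc (-T) T, -x (-t) = -x (-(-T)) + ∫ s in (-T)..t, g (-s) := by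
  intro t ht
  have ht' := neg_mem_symm_uIcc ht
  rw [intervalIntegral.integral_comp_neg, neg_neg, hx T right_mem_uIcc, hx (-t) ht',
    ← intervalIntegral.integral_interval_sub_left hg
      (hg.mono_set (uIcc_subset_uIcc left_mem_uIcc ht'))]
  ring

namespace ReflectionInequality

variable {T m : ℝ} {x g : ℝ → ℝ} (hg : IntervalIntegrable g volume (-T) T)
  (hx : ∀ t ∈ uIcc (-T) T, x t = x (-T) + ∫ s in (-T)..t, g s)
  (hpos : ∀ᵐ t, t ∈ uIcc (-T) T → 0 < g t + m * x (-t))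
include hg hx hpos

theorem strictMonoOn_rotatedPair {θ a b : ℝ} (ha : a ∈ uIcc (-T) T) (hb : b ∈ uIcc (-T) T)
    (hθ : ∀ s ∈ Icc a b, θ - m * s ∈ Icc 0 (π / 2)) :
    StrictMonoOn (rotatedPair x m θ) (Icc a b) := by
  have hgn := hg.comp_neg_symm
  have hxn := neg_comp_neg_eq_add_integral hg hx
  have hxAC := absolutelyContinuousOnInterval_of_eq_add_integral hg hx
  have hxnAC : AbsolutelyContinuousOnInterval (fun r => x (-r)) (-T) T := by
    simpa using (absolutelyContinuousOnInterval_of_eq_add_integral hgn hxn).fun_neg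
  have hsub : uIcc a b ⊆ uIcc (-T) T := uIcc_subset_uIcc ha hb
  refine ((hxAC.rotatedPair hxnAC).mono hsub).strictMonoOn_of_ae_deriv_pos ?_
  filter_upwards [ae_hasDerivAt_of_eq_add_integral hg hx,
    ae_hasDerivAt_of_eq_add_integral hgn hxn, hpos, ae_comp_neg_of_symm_uIcc hpos]
    with s hdx hdxn hps hpns hs
  have hsT := hsub (Icc_subset_uIcc hs)
  have hdxn' : HasDerivAt (fun r => x (-r)) (-g (-s)) s := by simpa using (hdxn hsT).fun_neg
  rw [(hasDerivAt_rotatedPair (hdx hsT) hdxn').deriv, sub_neg_eq_add, add_comm (m * x s)]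
  rw [neg_neg] at hpns
  exact mul_cos_add_mul_sin_pos (hps hsT) (hpns hsT) (hθ s hs)

theorem strictMonoOn_rotatedPair_Icc_zero {θ b : ℝ} (hb : b ∈ Icc 0 T)
    (hθ : ∀ s ∈ Icc 0 b, θ - m * s ∈ Icc 0 (π / 2)) :
    StrictMonoOn (rotatedPair x m θ) (Icc 0 b) := by
  have hIcc : Icc 0 T ⊆ uIcc (-T) T :=
    (Icc_subset_Icc_left (by linarith [hb.1, hb.2])).trans Icc_subset_uIcc
  exact strictMonoOn_rotatedPair hg hx hpos (hIcc (left_mem_Icc.2 (hb.1.trans hb.2))) (hIcc hb)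
    hθ

theorem pos_right_endpoint (hT : 0 < T) (hm : 0 ≤ m) (hmT : m * T ≤ π / 4)
    (hbc : 0 ≤ x (-T) - x T) : 0 < x T := by
  have hTmem : T ∈ Icc 0 T := right_mem_Icc.2 hT.le
  have hmT₀ := (mul_mem_Icc_zero_pi_div_four hm hmT hTmem).1
  have h := strictMonoOn_rotatedPair_Icc_zero hg hx hpos (θ := π / 4) hTmem
    (fun s hs => ⟨by linarith [(mul_mem_Icc_zero_pi_div_four hm hmT hs).2],
      by linarith [pi_pos, (mul_mem_Icc_zero_pi_div_four hm hmT hs).1]⟩)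
    (left_mem_Icc.2 hT.le) hTmem hT
  simp only [rotatedPair, mul_zero, sub_zero, neg_zero, cos_pi_div_four, sin_pi_div_four,
    sub_self] at h
  have hsc := sin_le_cos_of_le_pi_div_four (α := π / 4 - m * T) (by linarith) (by linarith)
  have hsin : 0 ≤ sin (π / 4 - m * T) :=
    sin_nonneg_of_nonneg_of_le_pi (by linarith) (by linarith [pi_pos])
  nlinarith

theorem mul_sin_lt_mul_cos (hT : 0 < T) (hm : 0 ≤ m) (hmT : m * T ≤ π / 4)
    (hbc : 0 ≤ x (-T) - x T) : ∀ r ∈ Ico 0 T, x r * sin (m * r) < x (-r) * cos (m * r) := by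
  intro r hr
  have hTmem : T ∈ Icc 0 T := right_mem_Icc.2 hT.le
  have hmT' := mul_mem_Icc_zero_pi_div_four hm hmT hTmem
  have h := strictMonoOn_rotatedPair_Icc_zero hg hx hpos (θ := π / 2) hTmem
    (fun s hs => ⟨by linarith [pi_pos, (mul_mem_Icc_zero_pi_div_four hm hmT hs).2],
      by linarith [(mul_mem_Icc_zero_pi_div_four hm hmT hs).1]⟩)
    (Ico_subset_Icc_self hr) hTmem hr.2
  simp only [rotatedPair, cos_pi_div_two_sub, sin_pi_div_two_sub] at h
  have hsc := sin_le_cos_of_le_pi_div_four hmT'.1 hmT'.2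
  have hcos : 0 ≤ cos (m * T) :=
    cos_nonneg_of_mem_Icc ⟨by linarith [pi_pos, hmT'.1], by linarith [pi_pos, hmT'.2]⟩
  nlinarith [pos_right_endpoint hg hx hpos hT hm hmT hbc]

theorem pos_of_pos_at_zero (hm : 0 ≤ m) (hmT : m * T ≤ π / 4) (hx0 : 0 ≤ x 0) :
    ∀ t ∈ Ioc 0 T, 0 < x t := by
  intro t ht
  have hmt := mul_mem_Icc_zero_pi_div_four hm hmT (Ioc_subset_Icc_self ht)
  have h := strictMonoOn_rotatedPair_Icc_zero hg hx hpos (θ := m * t) (Ioc_subset_Icc_self ht)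
    (fun s hs => ⟨by nlinarith [hs.2], by nlinarith [hs.1, pi_pos, hmt.2]⟩)
    (left_mem_Icc.2 ht.1.le) (right_mem_Icc.2 ht.1.le) ht.1
  simp only [rotatedPair, mul_zero, sub_zero, neg_zero, sub_self, cos_zero, sin_zero] at h
  nlinarith [sin_le_cos_of_le_pi_div_four hmt.1 hmt.2]

theorem pos_of_mul_le_pi_div_four (hT : 0 < T) (hm : 0 < m) (hmT : m * T ≤ π / 4)
    (hbc : 0 ≤ x (-T) - x T) : ∀ t ∈ Icc (-T) T, 0 < x t := by
  have hrefl := mul_sin_lt_mul_cos hg hx hpos hT hm.le hmT hbc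
  have hx0 : 0 < x 0 := by simpa using hrefl 0 ⟨le_rfl, hT⟩
  have hright := pos_of_pos_at_zero hg hx hpos hm.le hmT hx0.le
  intro t ht
  rcases lt_trichotomy t 0 with htn | rfl | htp
  · rcases ht.1.eq_or_lt with rfl | htT
    · linarith [pos_right_endpoint hg hx hpos hT hm.le hmT hbc]
    have hr : -t ∈ Ioc 0 T := ⟨by linarith, by linarith⟩
    have hmr := mul_mem_Icc_zero_pi_div_four hm.le hmT (Ioc_subset_Icc_self hr)
    have hsin : 0 < sin (m * -t) :=
      sin_pos_of_pos_of_lt_pi (mul_pos hm hr.1) (by linarith [pi_pos, hmr.2])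
    have hcos : 0 < cos (m * -t) :=
      cos_pos_of_mem_Ioo ⟨by linarith [pi_pos, hmr.1], by linarith [pi_pos, hmr.2]⟩
    have h := hrefl (-t) ⟨hr.1.le, by linarith⟩
    rw [neg_neg] at h
    nlinarith [mul_pos (hright (-t) hr) hsin]
  · exact hx0
  · exact hright t ⟨htp, ht.2⟩

theorem neg_of_neg_mul_le_pi_div_four (hT : 0 < T) (hm : m < 0) (hmT : -m * T ≤ π / 4)
    (hbc : 0 ≤ x (-T) - x T) : ∀ t ∈ Icc (-T) T, x t < 0 := by
  have hpos' : ∀ᵐ t, t ∈ uIcc (-T) T → 0 < g (-t) + -m * -x (-(-t)) := by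
    filter_upwards [ae_comp_neg_of_symm_uIcc hpos] with t ht hmem
    simpa using ht hmem
  have h := pos_of_mul_le_pi_div_four hg.comp_neg_symm (neg_comp_neg_eq_add_integral hg hx)
    hpos' hT (neg_pos.2 hm) hmT (by simpa using hbc)
  intro t ht
  simpa using h (-t) (by simpa [neg_le, and_comm] using ht)

end ReflectionInequality

/-- Let `x : [−T,T] → ℝ` be absolutely continuous (expressed by
an integrable a.e. derivative `g` with `x(t) = x(−T) + ∫_{−T}^t g(s) ds`) with
`x(−T) − x(T) ≥ 0` and `x'(t) + m·x(−t) > 0` for a.e. `t ∈ I`.  Then: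
(1) if `m ∈ (0, π/(4T)]` then `x > 0` on `I`;
(2) if `m ∈ [−π/(4T), 0)` then `x < 0` on `I`. -/
theorem stmt_15 (T m : ℝ) (hT : 0 < T) (x g : ℝ → ℝ)
    (hg : IntegrableOn g (Set.Icc (-T) T))
    (hrepr : ∀ t ∈ Set.Icc (-T) T, x t = x (-T) + ∫ s in (-T)..t, g s)
    (hbc : 0 ≤ x (-T) - x T)
    (hpos : ∀ᵐ t ∂(volume.restrict (Set.Icc (-T) T)), 0 < g t + m * x (-t)) :
    (m ∈ Set.Ioc 0 (Real.pi / (4 * T)) → ∀ t ∈ Set.Icc (-T) T, 0 < x t) ∧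
    (m ∈ Set.Ico (-(Real.pi / (4 * T))) 0 → ∀ t ∈ Set.Icc (-T) T, x t < 0) := by
  have hI : uIcc (-T) T = Icc (-T) T := uIcc_of_le (by linarith)
  have hg' : IntervalIntegrable g volume (-T) T :=
    (intervalIntegrable_iff_integrableOn_Icc_of_le (by linarith)).2 hg
  have hrepr' : ∀ t ∈ uIcc (-T) T, x t = x (-T) + ∫ s in (-T)..t, g s := hI ▸ hrepr
  have hpos' : ∀ᵐ t, t ∈ uIcc (-T) T → 0 < g t + m * x (-t) :=
    hI ▸ (ae_restrict_iff' measurableSet_Icc).1 hpos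
  have hmT : ∀ μ ≤ π / (4 * T), μ * T ≤ π / 4 := fun μ h => by
    rw [le_div_iff₀ (by positivity)] at h; linarith
  refine ⟨fun ⟨hm, hmle⟩ => ?_, fun ⟨hmge, hm⟩ => ?_⟩
  · exact ReflectionInequality.pos_of_mul_le_pi_div_four hg' hrepr' hpos' hT hm (hmT m hmle) hbc
  · exact ReflectionInequality.neg_of_neg_mul_le_pi_div_four hg' hrepr' hpos' hT hm
      (hmT (-m) (by linarith)) hbc
end
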